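/- arXiv:2502.07262 — 5 statements merged into one kernel-verified Lean document; each statement's English description precedes it below -/
import Mathlib

section
/- Let n₀, d₀, k be positive integers with d₀ dividing n₀ and gcd(n₀/d₀, k) = 1. Let L ⊆ ℤ^k be the subgroup generated by (n₀ℤ)^k and (d₀, …, d₀). Then for every v ∈ L, one has v ∈ (n₀ℤ)^k if and only if n₀ divides the sum of the coordinates of v. -/
private def S2aux (n₀ d₀ k : ℕ) : AddSubgroup (Fin k → ℤ) where
  carrier := {v | ∃ m : ℤ, ∀ i, (n₀ : ℤ) ∣ v i - m * d₀}
  zero_mem' := ⟨0, fun i => by simp⟩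
  add_mem' := by
    rintro a b ⟨m, hm⟩ ⟨m', hm'⟩
    exact ⟨m + m', fun i => by
      have := dvd_add (hm i) (hm' i)
      simpa [add_mul, sub_add_sub_comm] using this⟩
  neg_mem' := by
    rintro a ⟨m, hm⟩
    exact ⟨-m, fun i => by
      have h : (-a) i - (-m) * d₀ = -(a i - m * d₀) := by simp; ring
      rw [h]; exact (hm i).neg_right⟩

/-- For positive integers `n₀, d₀, k` with `d₀ ∣ n₀` and `gcd(n₀/d₀, k) = 1`,
every element `v` of the subgroup `L ⊆ ℤ^k` generated by `(n₀ℤ)^k` and `(d₀, …, d₀)`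
has all coordinates divisible by `n₀` iff `n₀` divides the sum of its coordinates. -/
theorem stmt2 (n₀ d₀ k : ℕ) (hn₀ : 0 < n₀) (hd₀ : 0 < d₀) (hk : 0 < k) (hdvd : d₀ ∣ n₀)
    (hgcd : Nat.gcd (n₀ / d₀) k = 1) :
    ∀ v ∈ AddSubgroup.closure
        ({v : Fin k → ℤ | ∀ i, (n₀ : ℤ) ∣ v i} ∪ {fun _ => (d₀ : ℤ)}),
      (∀ i, (n₀ : ℤ) ∣ v i) ↔ (n₀ : ℤ) ∣ ∑ i, v i := by
  intro v hv
  have hsub : AddSubgroup.closure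
      ({v : Fin k → ℤ | ∀ i, (n₀ : ℤ) ∣ v i} ∪ {fun _ => (d₀ : ℤ)}) ≤ S2aux n₀ d₀ k := by
    apply AddSubgroup.closure_le _ |>.mpr
    rintro w (hw | hw)
    · exact ⟨0, fun i => by simpa using hw i⟩
    · refine ⟨1, fun i => ?_⟩
      simp only [Set.mem_singleton_iff] at hw
      simp [hw]
  obtain ⟨m, hm⟩ := hsub hv
  constructor
  · exact fun h => Finset.dvd_sum fun i _ => h i
  · intro hsum i
    -- n₀ ∣ ∑ (v i - m d₀) = ∑ v i - k * (m * d₀)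
    have h1 : (n₀ : ℤ) ∣ ∑ i, (v i - m * d₀) := Finset.dvd_sum fun i _ => hm i
    have h2 : (∑ i, (v i - m * d₀)) = (∑ i, v i) - k * (m * d₀) := by
      rw [Finset.sum_sub_distrib, Finset.sum_const]
      simp [mul_comm, mul_assoc]
    have h3 : (n₀ : ℤ) ∣ (k : ℤ) * (m * d₀) := by
      have := dvd_sub hsum (h2 ▸ h1)
      simpa using this
    -- set e = n₀ / d₀
    set e := n₀ / d₀ with he
    have hne : n₀ = d₀ * e := (Nat.mul_div_cancel' hdvd).symm
    have h4 : (e : ℤ) ∣ (k : ℤ) * m := by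
      have hd0 : (d₀ : ℤ) ≠ 0 := by exact_mod_cast hd₀.ne'
      have : (d₀ : ℤ) * e ∣ (d₀ : ℤ) * ((k : ℤ) * m) := by
        have : ((n₀ : ℕ) : ℤ) ∣ (k : ℤ) * (m * d₀) := h3
        rw [hne] at this
        push_cast at this ⊢
        calc (d₀ : ℤ) * e ∣ (k : ℤ) * (m * d₀) := this
          _ = (d₀ : ℤ) * ((k : ℤ) * m) := by ring
      exact (mul_dvd_mul_iff_left hd0).mp this
    have hcop : IsCoprime (e : ℤ) (k : ℤ) := by
      rw [Int.isCoprime_iff_gcd_eq_one]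
      simpa [Int.gcd_natCast_natCast] using hgcd
    have h5 : (e : ℤ) ∣ m := hcop.dvd_of_dvd_mul_left h4
    have h6 : (n₀ : ℤ) ∣ m * d₀ := by
      obtain ⟨c, hc⟩ := h5
      refine ⟨c, ?_⟩
      rw [hc, hne]; push_cast; ring
    have := dvd_add (hm i) h6
    simpa using this
end

section
/- Let n₀, d₀, k be positive integers with d₀ dividing n₀ and gcd(n₀/d₀, k) = 1. Let L ⊆ ℤ^k be the subgroup generated by (n₀ℤ)^k and (d₀, …, d₀). If s ∈ {0, 1, …, n₀−1}^k and w ∈ S_k is a permutation such that the vector w·s − s (where w·s permutes the coordinates of s by w) lies in L, then w·s = s. -/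
/-- With `L ⊆ ℤ^k` generated by `(n₀ℤ)^k` and `(d₀, …, d₀)` (where `d₀ ∣ n₀`
and `gcd(n₀/d₀, k) = 1`), if `s` is a tuple with entries in `{0, …, n₀ - 1}` and
`w ∈ S_k` is such that `w·s - s ∈ L`, then `w·s = s`. -/
theorem stmt3 (n₀ d₀ k : ℕ) (hn₀ : 0 < n₀) (hd₀ : 0 < d₀) (hk : 0 < k) (hdvd : d₀ ∣ n₀)
    (hgcd : Nat.gcd (n₀ / d₀) k = 1)
    (s : Fin k → ℤ) (hs : ∀ i, 0 ≤ s i ∧ s i < n₀)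
    (w : Equiv.Perm (Fin k))
    (hmem : (fun i => s (w i)) - s ∈ AddSubgroup.closure
        ({v : Fin k → ℤ | ∀ i, (n₀ : ℤ) ∣ v i} ∪ {fun _ => (d₀ : ℤ)})) :
    (fun i => s (w i)) = s := by
  -- the subgroup of vectors congruent to a constant multiple of d₀ mod n₀
  set H : AddSubgroup (Fin k → ℤ) :=
    { carrier := {v | ∃ c : ℤ, ∀ i, (n₀ : ℤ) ∣ v i - c * d₀}
      zero_mem' := ⟨0, by intro i; simp⟩
      add_mem' := by
        rintro a b ⟨c₁, h₁⟩ ⟨c₂, h₂⟩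
        refine ⟨c₁ + c₂, fun i => ?_⟩
        have := dvd_add (h₁ i) (h₂ i)
        simpa [Pi.add_apply, add_mul, sub_add_sub_comm] using this
      neg_mem' := by
        rintro a ⟨c, h⟩
        refine ⟨-c, fun i => ?_⟩
        have := (h i).neg_right
        simpa [neg_sub, neg_mul, sub_eq_add_neg, add_comm] using this.neg_left }
  have hsub : AddSubgroup.closure
      ({v : Fin k → ℤ | ∀ i, (n₀ : ℤ) ∣ v i} ∪ {fun _ => (d₀ : ℤ)}) ≤ H := by
    rw [AddSubgroup.closure_le]
    rintro v (hv | hv)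
    · exact ⟨0, fun i => by simpa using hv i⟩
    · rcases hv with rfl
      exact ⟨1, fun i => by simp⟩
  obtain ⟨c, hc⟩ := hsub hmem
  simp only [Pi.sub_apply] at hc
  -- summing over i
  have hsum : ∑ i, (s (w i) - s i - c * d₀) = -(k * c * d₀) := by
    have : ∑ i, s (w i) = ∑ i, s i := Equiv.sum_comp w s
    rw [Finset.sum_sub_distrib, Finset.sum_sub_distrib, this]
    simp [Finset.sum_const, mul_assoc]
  have hdvdsum : (n₀ : ℤ) ∣ (k : ℤ) * c * d₀ := by
    have := Finset.dvd_sum (fun i (_ : i ∈ Finset.univ) => hc i)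
    rw [hsum] at this
    exact (dvd_neg.mp this)
  -- write n₀ = d₀ * m
  obtain ⟨m, hm⟩ := hdvd
  have hmzk : Nat.gcd m k = 1 := by
    rwa [hm, Nat.mul_div_cancel_left _ hd₀] at hgcd
  have hd₀z : (d₀ : ℤ) ≠ 0 := by exact_mod_cast hd₀.ne'
  have hmk : (m : ℤ) ∣ (k : ℤ) * c := by
    have h := hdvdsum
    rw [hm] at h
    push_cast at h
    rw [mul_comm (d₀:ℤ) (m:ℤ)] at h
    exact (mul_dvd_mul_iff_right hd₀z).mp h
  have hcop : IsCoprime (m : ℤ) (k : ℤ) := by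
    rw [Int.isCoprime_iff_gcd_eq_one]
    exact_mod_cast hmzk
  have hmc : (m : ℤ) ∣ c := hcop.dvd_of_dvd_mul_left hmk
  obtain ⟨c', hc'⟩ := hmc
  have hn₀cd : (n₀ : ℤ) ∣ c * d₀ := by
    refine ⟨c' * 1 * 1, ?_⟩
    have : (n₀ : ℤ) = d₀ * m := by exact_mod_cast hm
    rw [this, hc']; ring
  funext i
  have h1 : (n₀ : ℤ) ∣ s (w i) - s i := by
    have := dvd_add (hc i) hn₀cd
    simpa using this
  have h2 := hs i
  have h3 := hs (w i)
  obtain ⟨q, hq⟩ := h1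
  have hn₀z : (0:ℤ) < n₀ := by exact_mod_cast hn₀
  have hq0 : q = 0 := by nlinarith [h2.1, h2.2, h3.1, h3.2]
  subst hq0
  simp only [mul_zero] at hq
  show s (w i) = s i
  linarith
end

section
/- Let k ≥ 1 and n₀ ≥ 1. Consider the semidirect product W = S_k ⋉ ℤ^k, where S_k acts on ℤ^k by permuting coordinates. Let σ₀ ∈ S_k be the k-cycle sending 1 ↦ 2 ↦ ⋯ ↦ k ↦ 1, and let Π = (σ₀, n₀·e_k) ∈ W, where e_k = (0, …, 0, 1). Then the subgroup of W generated by S_k × {0} and Π equals S_k ⋉ (n₀ℤ)^k. -/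
noncomputable section

/-- The action of `S_k` on `ℤ^k` (written multiplicatively) by permuting coordinates:
`(σ • v) i = v (σ⁻¹ i)`. -/
def permAut (k : ℕ) : Equiv.Perm (Fin k) →* MulAut (Multiplicative (Fin k → ℤ)) where
  toFun σ :=
    { toFun := fun v => Multiplicative.ofAdd (fun i => Multiplicative.toAdd v (σ.symm i))
      invFun := fun v => Multiplicative.ofAdd (fun i => Multiplicative.toAdd v (σ i))
      left_inv := fun v => by
        show Multiplicative.ofAdd (fun i => Multiplicative.toAdd v (σ.symm (σ i))) = v
        simp
      right_inv := fun v => by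
        show Multiplicative.ofAdd (fun i => Multiplicative.toAdd v (σ (σ.symm i))) = v
        simp
      map_mul' := fun a b => rfl }
  map_one' := by ext v; rfl
  map_mul' := fun σ τ => by ext v; rfl

/-- The semidirect product `W = S_k ⋉ ℤ^k`. -/
abbrev Wgrp (k : ℕ) := SemidirectProduct (Multiplicative (Fin k → ℤ)) (Equiv.Perm (Fin k)) (permAut k)

/-- The subgroup `S_k ⋉ (n₀ℤ)^k` of `W`. -/
def Wsub (k n₀ : ℕ) : Subgroup (Wgrp k) where
  carrier := {w | ∀ i, (n₀ : ℤ) ∣ Multiplicative.toAdd w.left i}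
  one_mem' := by intro i; simp
  mul_mem' := by
    intro a b ha hb i
    rw [SemidirectProduct.mul_left]
    exact dvd_add (ha i) (hb _)
  inv_mem' := by
    intro a ha i
    rw [SemidirectProduct.inv_left]
    exact ((ha _).neg_right)

/-- The element `Π = (σ₀, n₀ · e_k)` where `σ₀` is the `k`-cycle `finRotate k`
(`1 ↦ 2 ↦ ⋯ ↦ k ↦ 1`) and `e_k = (0, …, 0, 1)`. -/
def PiElt (k n₀ : ℕ) : Wgrp k :=
  ⟨Multiplicative.ofAdd (fun i : Fin k => if (i : ℕ) = k - 1 then (n₀ : ℤ) else 0),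
    finRotate k⟩

/-- In `W = S_k ⋉ ℤ^k` (with `S_k` permuting coordinates), the subgroup
generated by `S_k × {0}` and `Π = (σ₀, n₀·e_k)` equals `S_k ⋉ (n₀ℤ)^k`. -/
theorem stmt8 (k n₀ : ℕ) (hk : 0 < k) (hn₀ : 0 < n₀) :
    Subgroup.closure
        (Set.range (SemidirectProduct.inr :
            Equiv.Perm (Fin k) →* Wgrp k) ∪ {PiElt k n₀}) =
      Wsub k n₀ := by
  apply le_antisymm
  · rw [Subgroup.closure_le]
    rintro x (⟨σ, rfl⟩ | rfl)
    · intro i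
      show (n₀:ℤ) ∣ Multiplicative.toAdd (1 : Multiplicative (Fin k → ℤ)) i
      simp
    · intro i
      show (n₀:ℤ) ∣ (if (i : ℕ) = k - 1 then (n₀:ℤ) else 0)
      split <;> simp
  · -- reverse
    set S : Set (Wgrp k) := _
    set H := Subgroup.closure S with hH
    have hinr : ∀ σ : Equiv.Perm (Fin k), SemidirectProduct.inr σ ∈ H := fun σ =>
      Subgroup.subset_closure (Or.inl ⟨σ, rfl⟩)
    have hPi : PiElt k n₀ ∈ H := Subgroup.subset_closure (Or.inr rfl)
    have hv₀ : (SemidirectProduct.inl (Multiplicative.ofAdd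
        (fun i : Fin k => if (i : ℕ) = k - 1 then (n₀ : ℤ) else 0)) : Wgrp k) ∈ H := by
      have : (SemidirectProduct.inl (Multiplicative.ofAdd
          (fun i : Fin k => if (i : ℕ) = k - 1 then (n₀ : ℤ) else 0)) : Wgrp k)
          = PiElt k n₀ * SemidirectProduct.inr (finRotate k)⁻¹ := by
        rw [PiElt, SemidirectProduct.mk_eq_inl_mul_inr, mul_assoc, ← map_mul]
        simp
      rw [this]
      exact H.mul_mem hPi (hinr _)
    have hsingle : ∀ j : Fin k,
        (SemidirectProduct.inl (Multiplicative.ofAdd (Pi.single j (n₀:ℤ))) : Wgrp k) ∈ H := by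
      intro j
      have hkm : k - 1 < k := Nat.sub_lt hk one_pos
      set σ : Equiv.Perm (Fin k) := Equiv.swap j ⟨k - 1, hkm⟩
      have : (SemidirectProduct.inl ((permAut k σ) (Multiplicative.ofAdd
          (fun i : Fin k => if (i : ℕ) = k - 1 then (n₀ : ℤ) else 0))) : Wgrp k) ∈ H := by
        rw [SemidirectProduct.inl_aut]
        exact H.mul_mem (H.mul_mem (hinr σ) hv₀) ((H.inv_mem_iff).2 (hinr σ))
      convert this using 2
      show Pi.single j (n₀:ℤ) = fun i => if ((σ.symm i : Fin k) : ℕ) = k - 1 then (n₀:ℤ) else 0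
      funext i
      have : ((σ.symm i : Fin k) : ℕ) = k - 1 ↔ i = j := by
        constructor
        · intro h
          have : σ.symm i = ⟨k-1, hkm⟩ := Fin.ext h
          have := congrArg σ this
          simpa [σ, Equiv.swap_apply_right] using this
        · rintro rfl
          simp [σ, Equiv.swap_apply_left]
      rw [Pi.single_apply]
      by_cases h : i = j
      · subst h
        have h2 : (((Equiv.symm σ) i : Fin k) : ℕ) = k - 1 := this.mpr rfl
        simp [h2]
      · have : ¬ (((Equiv.symm σ) i : Fin k) : ℕ) = k - 1 := fun hh => h (this.mp hh)
        simp [h, this]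
    intro w hw
    rw [← SemidirectProduct.inl_left_mul_inr_right w]
    refine H.mul_mem ?_ (hinr _)
    -- w.left has all entries divisible
    obtain ⟨c, hc⟩ : ∃ c : Fin k → ℤ, Multiplicative.toAdd w.left = fun i => c i * n₀ := by
      refine ⟨fun i => (hw i).choose, funext fun i => ?_⟩
      rw [mul_comm]; exact (hw i).choose_spec
    have : w.left = ∏ j : Fin k, (Multiplicative.ofAdd (Pi.single j (n₀:ℤ))) ^ (c j) := by
      apply Multiplicative.toAdd.injective
      rw [hc]
      funext i
      have : Multiplicative.toAdd (∏ j : Fin k, (Multiplicative.ofAdd (Pi.single j (n₀:ℤ))) ^ (c j))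
          = ∑ j : Fin k, c j • Pi.single j (n₀:ℤ) := by
        rw [toAdd_prod]
        congr 1
      rw [this]
      simp [Finset.sum_apply, Pi.single_apply, mul_comm]
    rw [this]
    refine Finset.prod_induction _ (fun v => (SemidirectProduct.inl v : Wgrp k) ∈ H)
      (fun a b ha hb => by
        show (SemidirectProduct.inl (a * b) : Wgrp k) ∈ H
        rw [map_mul]; exact H.mul_mem ha hb)
      (by show (SemidirectProduct.inl 1 : Wgrp k) ∈ H
          rw [map_one]; exact H.one_mem)
      (fun j _ => by
        show (SemidirectProduct.inl (Multiplicative.ofAdd (Pi.single j (n₀:ℤ)) ^ c j) : Wgrp k) ∈ H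
        rw [map_zpow]; exact H.zpow_mem (hsingle j) _)

end
end

section
/- Let n, l₀, c, k, r₀ be positive integers with l₀ dividing n, and set r = k·r₀. Define n₀ = n/gcd(n, l₀) and d₀ = n/gcd(n, l₀·(2cr + r − 1)). Then the set of tuples s = (s₁, …, s_k) ∈ ℤ^k satisfying n ∣ l₀·((s₁+⋯+s_k)·(2c+1)·r₀ − s_i) for all i = 1, …, k equals the subgroup of ℤ^k generated by (n₀ℤ)^k and (d₀, …, d₀). -/
/-- With `r = k * r₀`, `n₀ = n / gcd(n, l₀)` and
`d₀ = n / gcd(n, l₀ * (2*c*r + r - 1))`, the set of tuples `s ∈ ℤ^k` with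
`n ∣ l₀ * ((s₁ + ⋯ + s_k) * (2c+1) * r₀ - s_i)` for all `i` equals the subgroup of
`ℤ^k` generated by `(n₀ℤ)^k` and the constant vector `(d₀, …, d₀)`. -/
theorem stmt9 (n l₀ c k r₀ : ℕ) (hn : 0 < n) (hl₀ : 0 < l₀) (hc : 0 < c)
    (hk : 0 < k) (hr₀ : 0 < r₀) (hln : l₀ ∣ n) (r : ℕ) (hr : r = k * r₀) :
    {s : Fin k → ℤ | ∀ i, (n : ℤ) ∣
        (l₀ : ℤ) * ((∑ j, s j) * (2 * (c : ℤ) + 1) * (r₀ : ℤ) - s i)} =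
      (AddSubgroup.closure
        ({v : Fin k → ℤ | ∀ i, ((n / Nat.gcd n l₀ : ℕ) : ℤ) ∣ v i} ∪
          {fun _ => ((n / Nat.gcd n (l₀ * (2 * c * r + r - 1)) : ℕ) : ℤ)}) :
        AddSubgroup (Fin k → ℤ)) := by
  obtain ⟨n₀, hnn₀⟩ := hln
  have hn₀pos : 0 < n₀ := by
    rcases Nat.eq_zero_or_pos n₀ with h | h
    · subst h; rw [hnn₀] at hn; simp at hn
    · exact h
  have hrpos : 0 < r := by subst hr; positivity
  set m := 2 * c * r + r - 1 with hm
  have hmZ : (m : ℤ) = (r : ℤ) * (2 * (c : ℤ) + 1) - 1 := by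
    have h1 : 1 ≤ 2 * c * r + r := by nlinarith
    have : (m : ℤ) = (2 * c * r + r : ℕ) - 1 := by
      rw [hm, Nat.cast_sub h1]; push_cast; ring
    rw [this]; push_cast; ring
  set g := Nat.gcd n₀ m with hg
  have hgpos : 0 < g := Nat.gcd_pos_of_pos_left _ hn₀pos
  have hgn : g ∣ n₀ := Nat.gcd_dvd_left _ _
  have hgm : g ∣ m := Nat.gcd_dvd_right _ _
  set d := n₀ / g with hd
  have hn₀d : n₀ = g * d := (Nat.mul_div_cancel' hgn).symm
  have hmgd : m = g * (m / g) := (Nat.mul_div_cancel' hgm).symm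
  have e1 : n / Nat.gcd n l₀ = n₀ := by
    rw [hnn₀, Nat.gcd_comm, Nat.gcd_eq_left (Dvd.intro n₀ rfl), Nat.mul_div_cancel_left _ hl₀]
  have e2 : n / Nat.gcd n (l₀ * m) = d := by
    rw [hnn₀, Nat.gcd_mul_left, Nat.mul_div_mul_left _ _ hl₀]
  -- divisibility reduction
  have hred : ∀ x : ℤ, ((n : ℤ) ∣ (l₀ : ℤ) * x) ↔ ((n₀ : ℤ) ∣ x) := by
    intro x
    rw [hnn₀]
    push_cast
    exact mul_dvd_mul_iff_left (by exact_mod_cast hl₀.ne')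
  -- n₀ ∣ d * m
  have hdm : (n₀ : ℤ) ∣ (d : ℤ) * (m : ℤ) := by
    refine ⟨((m / g : ℕ) : ℤ), ?_⟩
    rw [hn₀d]
    push_cast
    nth_rewrite 1 [hmgd]
    push_cast
    ring
  have hcop : IsCoprime ((d : ℕ) : ℤ) ((m / g : ℕ) : ℤ) := by
    rw [Nat.isCoprime_iff_coprime]
    exact Nat.coprime_div_gcd_div_gcd hgpos
  -- the LHS as a subgroup
  let K : AddSubgroup (Fin k → ℤ) :=
    { carrier := {s : Fin k → ℤ | ∀ i, (n : ℤ) ∣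
        (l₀ : ℤ) * ((∑ j, s j) * (2 * (c : ℤ) + 1) * (r₀ : ℤ) - s i)}
      zero_mem' := by intro i; simp
      add_mem' := by
        intro a b ha hb i
        have h1 := ha i
        have h2 := hb i
        have : (l₀ : ℤ) * ((∑ j, (a + b) j) * (2 * (c : ℤ) + 1) * (r₀ : ℤ) - (a + b) i)
            = (l₀ : ℤ) * ((∑ j, a j) * (2 * (c : ℤ) + 1) * (r₀ : ℤ) - a i)
              + (l₀ : ℤ) * ((∑ j, b j) * (2 * (c : ℤ) + 1) * (r₀ : ℤ) - b i) := by
          simp only [Pi.add_apply, Finset.sum_add_distrib]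
          ring
        rw [this]
        exact dvd_add h1 h2
      neg_mem' := by
        intro a ha i
        have h1 := ha i
        have : (l₀ : ℤ) * ((∑ j, (-a) j) * (2 * (c : ℤ) + 1) * (r₀ : ℤ) - (-a) i)
            = -((l₀ : ℤ) * ((∑ j, a j) * (2 * (c : ℤ) + 1) * (r₀ : ℤ) - a i)) := by
          simp only [Pi.neg_apply, Finset.sum_neg_distrib]
          ring
        rw [this]
        exact (h1).neg_right }
  apply Set.Subset.antisymm
  · -- LHS ⊆ closure
    intro s hs
    simp only [Set.mem_setOf_eq] at hs
    have hs' : ∀ i, (n₀ : ℤ) ∣ (∑ j, s j) * (2 * (c : ℤ) + 1) * (r₀ : ℤ) - s i := by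
      intro i; exact (hred _).mp (hs i)
    set S : ℤ := ∑ j, s j with hS
    set i₀ : Fin k := ⟨0, hk⟩ with hi₀
    set t : ℤ := s i₀ with ht
    have hdiff : ∀ i, (n₀ : ℤ) ∣ s i - t := by
      intro i
      have := dvd_sub (hs' i₀) (hs' i)
      simpa using this
    have hsum : (n₀ : ℤ) ∣ S - (k : ℤ) * t := by
      have := Finset.dvd_sum (fun i (_ : i ∈ Finset.univ) => hdiff i)
      have heq : (∑ i, (s i - t)) = S - (k : ℤ) * t := by
        rw [Finset.sum_sub_distrib, Finset.sum_const, Finset.card_univ, Fintype.card_fin]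
        push_cast; ring
      rwa [heq] at this
    have htm : (n₀ : ℤ) ∣ t * (m : ℤ) := by
      have h1 := hs' i₀
      have h2 := hsum
      have heq : t * (m : ℤ) = (S * (2 * (c : ℤ) + 1) * (r₀ : ℤ) - t)
          - (S - (k : ℤ) * t) * (2 * (c : ℤ) + 1) * (r₀ : ℤ) := by
        rw [hmZ, hr]; push_cast; ring
      rw [heq]
      exact dvd_sub h1 ((h2.mul_right _).mul_right _)
    -- d ∣ t
    have hdt : ((d : ℕ) : ℤ) ∣ t := by
      have h3 : ((g : ℕ) : ℤ) * (d : ℤ) ∣ ((g : ℕ) : ℤ) * (t * ((m / g : ℕ) : ℤ)) := by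
        have : ((g : ℕ) : ℤ) * (t * ((m / g : ℕ) : ℤ)) = t * (m : ℤ) := by
          nth_rewrite 2 [hmgd]
          push_cast; ring
        rw [this]
        have : ((g : ℕ) : ℤ) * (d : ℤ) = (n₀ : ℤ) := by rw [hn₀d]; push_cast; ring
        rw [this]
        exact htm
      have h4 : ((d : ℕ) : ℤ) ∣ t * ((m / g : ℕ) : ℤ) :=
        (mul_dvd_mul_iff_left (by exact_mod_cast hgpos.ne' : ((g : ℕ) : ℤ) ≠ 0)).mp h3
      exact hcop.dvd_of_dvd_mul_right h4
    obtain ⟨a, hat⟩ := hdt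
    -- decompose
    have hvmem : (fun i => s i - t) ∈
        ({v : Fin k → ℤ | ∀ i, ((n / Nat.gcd n l₀ : ℕ) : ℤ) ∣ v i} ∪
          {fun _ => ((n / Nat.gcd n (l₀ * m) : ℕ) : ℤ)}) := by
      left
      intro i
      rw [e1]
      exact hdiff i
    have hcmem : (fun _ : Fin k => ((n / Nat.gcd n (l₀ * m) : ℕ) : ℤ)) ∈
        ({v : Fin k → ℤ | ∀ i, ((n / Nat.gcd n l₀ : ℕ) : ℤ) ∣ v i} ∪
          {fun _ => ((n / Nat.gcd n (l₀ * m) : ℕ) : ℤ)}) := by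
      right; rfl
    have hdecomp : s = (fun i => s i - t)
        + a • (fun _ : Fin k => ((n / Nat.gcd n (l₀ * m) : ℕ) : ℤ)) := by
      funext i
      simp only [Pi.add_apply, Pi.smul_apply, smul_eq_mul, e2]
      rw [hat]; ring
    rw [hdecomp]
    exact AddSubgroup.add_mem _ (AddSubgroup.subset_closure hvmem)
      (AddSubgroup.zsmul_mem _ (AddSubgroup.subset_closure hcmem) a)
  · -- closure ⊆ LHS
    have hle : AddSubgroup.closure
        ({v : Fin k → ℤ | ∀ i, ((n / Nat.gcd n l₀ : ℕ) : ℤ) ∣ v i} ∪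
          {fun _ => ((n / Nat.gcd n (l₀ * m) : ℕ) : ℤ)}) ≤ K := by
      rw [AddSubgroup.closure_le]
      rintro v (hv | hv)
      · intro i
        rw [hred]
        simp only [Set.mem_setOf_eq, e1] at hv
        refine dvd_sub ?_ (hv i)
        exact Dvd.dvd.mul_right (Dvd.dvd.mul_right (Finset.dvd_sum fun j _ => hv j) _) _
      · simp only [Set.mem_singleton_iff] at hv
        subst hv
        intro i
        rw [hred, e2]
        have heq : (∑ _j : Fin k, ((d : ℕ) : ℤ)) * (2 * (c : ℤ) + 1) * (r₀ : ℤ) - (d : ℤ)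
            = (d : ℤ) * (m : ℤ) := by
          rw [Finset.sum_const, Finset.card_univ, Fintype.card_fin, hmZ, hr]
          push_cast; ring
        rw [heq]
        exact hdm
    exact hle
end

section
/- Let n₀, d₀, k be positive integers with d₀ dividing n₀ and gcd(n₀/d₀, k) = 1. Let L ⊆ ℤ^k be the subgroup generated by (n₀ℤ)^k and (d₀,…,d₀), and let S_k act on the finite quotient ℤ^k/L by permuting coordinates. Then the number of S_k-orbits on ℤ^k/L equals C(k + n₀ − 1, k) · d₀/n₀. -/
/-!
Reducing coordinates mod `n₀` identifies `ℤ^k / L` with `(ℤ/n₀)^k` modulo the diagonal copy of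
`H = ⟨d₀⟩ ≤ ℤ/n₀`, a group of order `n₀/d₀`. Hence the `S_k`-orbits on `ℤ^k / L` are the orbits
of `H` acting by translation on the `C(k + n₀ - 1, k)` multisets of size `k` in `ℤ/n₀`.
Translating by `h` shifts the sum of such a multiset by `k • h`, and `k` is prime to `|H|`,
so `H` acts freely and there are `C(k + n₀ - 1, k) / (n₀/d₀)` orbits.
-/

namespace Sym

variable {α : Type*} {n : ℕ}

def ofFn (f : Fin n → α) : Sym α n := ⟨List.ofFn f, by simp⟩

@[simp] theorem coe_ofFn (f : Fin n → α) : (ofFn f : Multiset α) = List.ofFn f := rfl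

theorem ofFn_surjective : Function.Surjective (ofFn : (Fin n → α) → Sym α n) := by
  rintro ⟨s, hs⟩
  obtain ⟨l, rfl⟩ := Quot.exists_rep s
  obtain rfl : l.length = n := hs
  exact ⟨fun i => l[i], Sym.ext (by simp [List.ofFn_getElem])⟩

theorem ofFn_comp_perm (f : Fin n → α) (σ : Equiv.Perm (Fin n)) : ofFn (f ∘ σ) = ofFn f :=
  Sym.ext (Multiset.coe_eq_coe.mpr (σ.ofFn_comp_perm f))

theorem ofFn_eq_ofFn_iff {f g : Fin n → α} :
    ofFn f = ofFn g ↔ ∃ σ : Equiv.Perm (Fin n), g = f ∘ σ := by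
  refine ⟨fun h => ?_, fun ⟨σ, hσ⟩ => hσ ▸ (ofFn_comp_perm f σ).symm⟩
  -- any linear order on `α` will do: sorting both tuples gives the same tuple
  let _ : LinearOrder α := IsWellOrder.linearOrder WellOrderingRel
  have hperm : (List.ofFn f).Perm (List.ofFn g) :=
    Multiset.coe_eq_coe.mp congr(($h : Multiset α))
  have hsort : f ∘ Tuple.sort f = g ∘ Tuple.sort g :=
    List.ofFn_injective <| List.Perm.eq_of_sortedLE
      (Tuple.monotone_sort f).sortedLE_ofFn (Tuple.monotone_sort g).sortedLE_ofFn
      (((Tuple.sort f).ofFn_comp_perm f).trans (hperm.trans ((Tuple.sort g).ofFn_comp_perm g).symm))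
  refine ⟨(Tuple.sort g).symm.trans (Tuple.sort f), funext fun i => ?_⟩
  simpa using (congrFun hsort ((Tuple.sort g).symm i)).symm

instance instAddAction {G : Type*} [AddMonoid G] [AddAction G α] : AddAction G (Sym α n) where
  vadd g s := s.map (g +ᵥ ·)
  zero_vadd s := by
    change s.map ((0 : G) +ᵥ ·) = s
    simp only [zero_vadd, map_id']
  add_vadd g h s := by
    change s.map ((g + h) +ᵥ ·) = (s.map (h +ᵥ ·)).map (g +ᵥ ·)
    simp only [map_map, Function.comp_def, add_vadd]

theorem coe_vadd {G : Type*} [AddMonoid G] [AddAction G α] (g : G) (s : Sym α n) :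
    ((g +ᵥ s : Sym α n) : Multiset α) = (s : Multiset α).map (g +ᵥ ·) := rfl

theorem vadd_ofFn {G : Type*} [AddMonoid G] [AddAction G α] (g : G) (f : Fin n → α) :
    g +ᵥ ofFn f = ofFn fun i => g +ᵥ f i :=
  Sym.ext (by simp [coe_vadd, List.map_ofFn, Function.comp_def])

theorem sum_vadd {A : Type*} [AddCommMonoid A] (a : A) (s : Sym A n) :
    ((a +ᵥ s : Sym A n) : Multiset A).sum = (s : Multiset A).sum + n • a := by
  simp [coe_vadd, add_comm a, Multiset.sum_map_add]

theorem stabilizer_eq_bot_of_coprime {A : Type*} [AddCommGroup A] (H : AddSubgroup A)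
    (hH : (Nat.card H).Coprime n) (s : Sym A n) : AddAction.stabilizer H s = ⊥ := by
  refine (AddSubgroup.eq_bot_iff_forall _).mpr fun h hh => ?_
  have hsum := congrArg (fun t : Sym A n => (t : Multiset A).sum)
    (AddAction.mem_stabilizer_iff.mp hh)
  simp only [AddSubgroup.vadd_def, sum_vadd, add_eq_left] at hsum
  exact hH.nsmul_right_bijective.injective (Subtype.ext (by simpa using hsum) : n • h = n • 0)

end Sym

theorem Quot.natCard_eq_of_surjective {A B : Type*} {r : A → A → Prop} (f : A → B)
    (hf : Function.Surjective f) (hr : ∀ a b, r a b → f a = f b)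
    (hfib : ∀ a b, f a = f b → Quot.mk r a = Quot.mk r b) : Nat.card (Quot r) = Nat.card B := by
  refine Nat.card_eq_of_bijective (Quot.lift f hr) ⟨fun x y hxy => ?_, fun b => ?_⟩
  · induction x using Quot.ind
    induction y using Quot.ind
    exact hfib _ _ hxy
  · obtain ⟨a, rfl⟩ := hf b
    exact ⟨Quot.mk r a, rfl⟩

open AddSubgroup AddAction

abbrev diagonalLattice (ι : Type*) (n d : ℕ) : AddSubgroup (ι → ℤ) :=
  closure ({v : ι → ℤ | ∀ i, (n : ℤ) ∣ v i} ∪ {fun _ => (d : ℤ)})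

theorem mem_diagonalLattice_iff {ι : Type*} {n d : ℕ} {v : ι → ℤ} :
    v ∈ diagonalLattice ι n d ↔ ∃ t : ℤ, ∀ i, (v i : ZMod n) = t * d := by
  constructor
  · intro hv
    induction hv using closure_induction with
    | mem v hv =>
      rcases hv with hv | rfl
      · exact ⟨0, fun i => by simpa [ZMod.intCast_zmod_eq_zero_iff_dvd] using hv i⟩
      · exact ⟨1, fun i => by simp⟩
    | zero => exact ⟨0, by simp⟩
    | add v w _ _ hv hw =>
      obtain ⟨t, ht⟩ := hv
      obtain ⟨u, hu⟩ := hw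
      exact ⟨t + u, fun i => by push_cast [Pi.add_apply, ht, hu]; ring⟩
    | neg v _ hv =>
      obtain ⟨t, ht⟩ := hv
      exact ⟨-t, fun i => by push_cast [Pi.neg_apply, ht]; ring⟩
  · rintro ⟨t, ht⟩
    have hmul : v - t • (fun _ => (d : ℤ)) ∈ diagonalLattice ι n d :=
      AddSubgroup.subset_closure <| Or.inl fun i => by
        rw [← ZMod.intCast_zmod_eq_zero_iff_dvd]
        simp [ht]
    have hdiag : (fun _ => (d : ℤ)) ∈ diagonalLattice ι n d :=
      AddSubgroup.subset_closure (Or.inr rfl)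
    simpa using add_mem hmul (zsmul_mem hdiag t)

section Residues

variable {k : ℕ}

def residues (n : ℕ) (s : Fin k → ℤ) : Sym (ZMod n) k := Sym.ofFn fun i => (s i : ZMod n)

theorem residues_comp_perm {n : ℕ} (s : Fin k → ℤ) (σ : Equiv.Perm (Fin k)) :
    residues n (s ∘ σ) = residues n s :=
  Sym.ofFn_comp_perm (fun i => (s i : ZMod n)) σ

theorem residues_surjective {n : ℕ} :
    Function.Surjective (residues n : (Fin k → ℤ) → Sym (ZMod n) k) :=
  Sym.ofFn_surjective.comp ZMod.intCast_surjective.comp_left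

theorem orbitRel_residues_iff {n : ℕ} (d : ℕ) {s s' : Fin k → ℤ} :
    orbitRel (zmultiples (d : ZMod n)) (Sym (ZMod n) k) (residues n s) (residues n s') ↔
      ∃ σ : Equiv.Perm (Fin k),
        (s : (Fin k → ℤ) ⧸ diagonalLattice (Fin k) n d) = ↑(s' ∘ σ) := by
  simp only [orbitRel_apply, mem_orbit_iff, Subtype.exists, mem_zmultiples_iff, residues,
    Sym.vadd_ofFn, Sym.ofFn_eq_ofFn_iff, QuotientAddGroup.eq, mem_diagonalLattice_iff]
  constructor
  · rintro ⟨_, ⟨t, rfl⟩, σ, hσ⟩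
    refine ⟨σ, -t, fun i => ?_⟩
    have hi := congrFun hσ i
    simp only [Function.comp_apply, AddSubgroup.vadd_def, vadd_eq_add, zsmul_eq_mul] at hi
    push_cast [Pi.add_apply, Pi.neg_apply, Function.comp_apply, hi]
    ring
  · rintro ⟨σ, t, ht⟩
    refine ⟨_, ⟨-t, rfl⟩, σ, funext fun i => ?_⟩
    have hi := ht i
    push_cast [Pi.add_apply, Pi.neg_apply, Function.comp_apply] at hi
    simp only [Function.comp_apply, AddSubgroup.vadd_def, vadd_eq_add, zsmul_eq_mul, Int.cast_neg]
    linear_combination -hi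

end Residues

theorem natCard_quot_perm_eq_natCard_orbitRel (n d k : ℕ) :
    Nat.card (Quot (fun x y : (Fin k → ℤ) ⧸ diagonalLattice (Fin k) n d =>
        ∃ σ : Equiv.Perm (Fin k), ∃ s : Fin k → ℤ,
          x = QuotientAddGroup.mk s ∧ y = QuotientAddGroup.mk (s ∘ σ))) =
      Nat.card (Quotient (orbitRel (zmultiples (d : ZMod n)) (Sym (ZMod n) k))) := by
  let residueOrbit : (Fin k → ℤ) ⧸ diagonalLattice (Fin k) n d →
      Quotient (orbitRel (zmultiples (d : ZMod n)) (Sym (ZMod n) k)) :=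
    Quotient.lift (fun s => ⟦residues n s⟧) fun s s' hss =>
      Quotient.sound <| (orbitRel_residues_iff d).mpr ⟨1, Quotient.sound hss⟩
  refine Quot.natCard_eq_of_surjective residueOrbit ?_ ?_ ?_
  · exact Function.Surjective.of_comp (g := QuotientAddGroup.mk)
      (Quotient.mk_surjective.comp residues_surjective)
  · rintro _ _ ⟨σ, s, rfl, rfl⟩
    exact congrArg (Quotient.mk _) (residues_comp_perm s σ).symm
  · rintro ⟨s⟩ ⟨s'⟩ h
    obtain ⟨σ, hσ⟩ := (orbitRel_residues_iff d).mp (Quotient.exact h)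
    exact (congrArg _ hσ).trans (Quot.sound ⟨σ, s', rfl, rfl⟩).symm

theorem stmt11_general (n₀ d₀ k : ℕ) (hn₀ : 0 < n₀)
    (hdvd : d₀ ∣ n₀) (hgcd : Nat.gcd (n₀ / d₀) k = 1) :
    Nat.card (Quot (fun x y : (Fin k → ℤ) ⧸ AddSubgroup.closure
          ({v : Fin k → ℤ | ∀ i, (n₀ : ℤ) ∣ v i} ∪ {fun _ => (d₀ : ℤ)}) =>
        ∃ σ : Equiv.Perm (Fin k), ∃ s : Fin k → ℤ,
          x = QuotientAddGroup.mk s ∧ y = QuotientAddGroup.mk (s ∘ σ))) =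
      Nat.choose (k + n₀ - 1) k * d₀ / n₀ := by
  have : NeZero n₀ := ⟨hn₀.ne'⟩
  have hH : Nat.card (zmultiples (d₀ : ZMod n₀)) = n₀ / d₀ := by
    rw [Nat.card_zmultiples, ZMod.addOrderOf_coe _ hn₀.ne', Nat.gcd_eq_right hdvd]
  have hfree :=
    Sym.stabilizer_eq_bot_of_coprime (zmultiples (d₀ : ZMod n₀)) (n := k) (hH ▸ hgcd)
  have hcount : (k + n₀ - 1).choose k =
      Nat.card (Quotient (orbitRel (zmultiples (d₀ : ZMod n₀)) (Sym (ZMod n₀) k))) *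
        (n₀ / d₀) := by
    rw [← hH, ← Nat.card_prod, ← Nat.card_congr (selfEquivOrbitsQuotientProd hfree),
      Sym.natCard_sym_eq_choose, Nat.card_zmod, add_comm]
  rw [natCard_quot_perm_eq_natCard_orbitRel, hcount, mul_assoc, Nat.div_mul_cancel hdvd,
    Nat.mul_div_cancel _ hn₀]

/-- Let `L ⊆ ℤ^k` be the subgroup generated by `(n₀ℤ)^k` and `(d₀,…,d₀)`,
where `d₀ ∣ n₀` and `gcd(n₀/d₀, k) = 1`. The number of orbits of `S_k` acting on the
finite quotient `ℤ^k / L` by permuting coordinates equals `C(k + n₀ - 1, k) * d₀ / n₀`.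
The orbit set is encoded as the quotient of `ℤ^k / L` by the relation identifying the
class of `s` with the class of `s ∘ σ` for every `σ ∈ S_k`. -/
theorem stmt11 (n₀ d₀ k : ℕ) (hn₀ : 0 < n₀) (hd₀ : 0 < d₀) (hk : 0 < k)
    (hdvd : d₀ ∣ n₀) (hgcd : Nat.gcd (n₀ / d₀) k = 1) :
    Nat.card (Quot (fun x y : (Fin k → ℤ) ⧸ AddSubgroup.closure
          ({v : Fin k → ℤ | ∀ i, (n₀ : ℤ) ∣ v i} ∪ {fun _ => (d₀ : ℤ)}) =>
        ∃ σ : Equiv.Perm (Fin k), ∃ s : Fin k → ℤ,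
          x = QuotientAddGroup.mk s ∧ y = QuotientAddGroup.mk (s ∘ σ))) =
      Nat.choose (k + n₀ - 1) k * d₀ / n₀ :=
  stmt11_general n₀ d₀ k hn₀ hdvd hgcd
end
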